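/- Let T be a decorated rooted tree with root v_0 such that f(α) ∈ {0,1} for every arrow α. For every out-pair (x,e) (i.e., e = {x,x'} is an edge with x < x' in the root order), one has p(x,e) = 1 + Σ_{y ∈ Y(x,e)} φ(x,y)·(δ_y - 2), where Y(x,e) = {y ∈ V ∪ A_0 : e lies on the path from x to y}, and φ(x,y) is the product of q(ε,u) over all pairs (ε,u) with u a cell of the path γ_{x,y} other than x, ε an edge incident to u not lying on the path. -/

import Mathlib

open Finset
open scoped Classical

/-- A decorated tree: a finite tree on cells `C = V ∪ A`, where `isArrow`
distinguishes arrows (of valency 1) from vertices.  `f a` is the decoration of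
the arrow `a`, and `q x y` is the decoration of the edge `{x,y}` near `x`.
Decorations at arrows are `1`; decorations near a vertex are pairwise coprime. -/
structure DecTree where
  C : Type
  [fintypeC : Fintype C]
  [decEqC : DecidableEq C]
  G : SimpleGraph C
  [decAdj : DecidableRel G.Adj]
  isTree : G.IsTree
  isArrow : C → Prop
  [decArrow : DecidablePred isArrow]
  arrowValency : ∀ a, isArrow a → G.degree a = 1
  f : C → ℤ
  q : C → C → ℤ
  q_arrow : ∀ a x, isArrow a → G.Adj a x → q a x = 1
  q_coprime : ∀ v x y, ¬ isArrow v → G.Adj v x → G.Adj v y → x ≠ y →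
    IsCoprime (q v x) (q v y)

attribute [instance] DecTree.fintypeC DecTree.decEqC DecTree.decAdj DecTree.decArrow

namespace DecTree

variable (T : DecTree)

/-- The unique path between two cells of the tree. -/
noncomputable def path (x y : T.C) : T.G.Walk x y :=
  (T.isTree.existsUnique_path x y).exists.choose

/-- `xva T v a` is the quantity `x_{v,a}`: the decoration `f a` times the
product of the decorations `q(ε,u)` over all edges `ε = {u,w}` incident to the
path from `v` to `a` (i.e. `u` on the path, `w` off the path). -/
noncomputable def xva (v a : T.C) : ℤ :=
  T.f a * ∏ uw ∈ Finset.univ.filter (fun uw : T.C × T.C =>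
      uw.1 ∈ (T.path v a).support ∧ T.G.Adj uw.1 uw.2 ∧
        uw.2 ∉ (T.path v a).support),
    T.q uw.1 uw.2

/-- `xhat T v a` is `x̂_{v,a}`: as `x_{v,a}` but omitting edges incident to `v`. -/
noncomputable def xhat (v a : T.C) : ℤ :=
  T.f a * ∏ uw ∈ Finset.univ.filter (fun uw : T.C × T.C =>
      uw.1 ∈ (T.path v a).support ∧ uw.1 ≠ v ∧ T.G.Adj uw.1 uw.2 ∧
        uw.2 ∉ (T.path v a).support),
    T.q uw.1 uw.2

/-- The multiplicity `N_v = Σ_{α ∈ A∖A₀} x_{v,α}`. -/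
noncomputable def N (v : T.C) : ℤ :=
  ∑ a ∈ Finset.univ.filter (fun a => T.isArrow a ∧ T.f a ≠ 0), T.xva v a

/-- The multiplicity of the tree, `M(T) = -Σ_{v ∈ V∪A₀} N_v (δ_v - 2)`. -/
noncomputable def M : ℤ :=
  - ∑ v ∈ Finset.univ.filter (fun v => ¬ T.isArrow v ∨ T.f v = 0),
      T.N v * ((T.G.degree v : ℤ) - 2)

/-- `p(α, e_α) = Σ_{β ∈ (A∖A₀)∖{α}} x̂_{α,β}` for an arrow `α`. -/
noncomputable def parrow (a : T.C) : ℤ :=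
  ∑ b ∈ Finset.univ.filter (fun b => T.isArrow b ∧ T.f b ≠ 0 ∧ b ≠ a), T.xhat a b

/-- `F(T) = Σ_{α ∈ A∖A₀} gcd(f(α), p(α, e_α))`. -/
noncomputable def F : ℤ :=
  ∑ a ∈ Finset.univ.filter (fun a => T.isArrow a ∧ T.f a ≠ 0),
    (Int.gcd (T.f a) (T.parrow a) : ℤ)

/-- `Q(e,x)` for `e = {x,y}`: product of the decorations near `x` of the
other edges incident to `x`. -/
noncomputable def Qe (x y : T.C) : ℤ :=
  ∏ w ∈ (T.G.neighborFinset x).erase y, T.q x w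

/-- `lt T v0 x y` means `x < y` in the order rooted at `v0`:
`x ≠ y` and `x` lies on the path from `v0` to `y`. -/
def lt (v0 x y : T.C) : Prop :=
  x ≠ y ∧ x ∈ (T.path v0 y).support

/-- `v0` is a root: a vertex all of whose edge decorations are `1`, such that
for every other vertex `v`, all edges at `v` not on the path `γ_{v0,v}` have
decoration `≥ 1` near `v`, at most one of them being `> 1`. -/
def IsRoot (v0 : T.C) : Prop :=
  ¬ T.isArrow v0 ∧
  (∀ x, T.G.Adj v0 x → T.q v0 x = 1) ∧
  ∀ v, ¬ T.isArrow v → v ≠ v0 →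
    (∀ x, T.G.Adj v x → s(v, x) ∉ (T.path v0 v).edges → 1 ≤ T.q v x) ∧
    (∀ x y, T.G.Adj v x → T.G.Adj v y →
      s(v, x) ∉ (T.path v0 v).edges → s(v, y) ∉ (T.path v0 v).edges →
      1 < T.q v x → 1 < T.q v y → x = y)

/-- The tree has negative determinants: `det(e) < 0` for every edge `e`
joining two vertices. -/
def HasNegDet : Prop :=
  ∀ x y, ¬ T.isArrow x → ¬ T.isArrow y → T.G.Adj x y →
    T.q x y * T.q y x - T.Qe x y * T.Qe y x < 0

/-- A subset `S` of the cells is connected if every path whose endpoints lie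
in `S` lies entirely in `S`. -/
def ConnectedSet (S : Set T.C) : Prop :=
  ∀ x y, x ∈ S → y ∈ S → ∀ u, u ∈ (T.path x y).support → u ∈ S

/-- `φ(x,y)`: product of `q(ε,u)` over cells `u ≠ x` of the path from `x` to
`y` and edges `ε` incident to `u` not lying on the path. -/
noncomputable def phi (x y : T.C) : ℤ :=
  ∏ uw ∈ Finset.univ.filter (fun uw : T.C × T.C =>
      uw.1 ∈ (T.path x y).support ∧ uw.1 ≠ x ∧ T.G.Adj uw.1 uw.2 ∧
        uw.2 ∉ (T.path x y).support),
    T.q uw.1 uw.2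

end DecTree

/-!
Write `κ(y) = 2 - δ_y`; since arrows have valency one, `κ = 1` on arrows. With `f` taking values
in `{0, 1}`, the claim is the identity `∑_{y beyond e} φ(x,y) κ(y) = 1`, where `y` now runs over
all cells beyond `e = {x, x'}`. Splitting the cells beyond `e` into `x'` and the branches beyond
the other edges `{x', w}` at `x'` gives `φ(x,y) = (∏_{v ≠ x, w} q(x',v)) φ(x',y)` on the branch
of `w`, so by induction the sum equals `(2 - δ_{x'}) ∏_v q(x',v) + ∑_w ∏_{v ≠ w} q(x',v)`.
Because `x'` lies farther from the root than `x`, the root condition says that at most one of the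
numbers `q(x',v)` differs from `1`, and for such families this expression is `1`.
-/

theorem Finset.sum_prod_erase_eq_of_eq_one {ι R : Type*} [DecidableEq ι] [CommRing R]
    {s : Finset ι} {g : ι → R} {i₀ : ι} (hg : ∀ i ∈ s, i ≠ i₀ → g i = 1) :
    ∑ j ∈ s, ∏ i ∈ s.erase j, g i = 1 + (s.card - 1) * ∏ i ∈ s, g i := by
  by_cases hi₀ : i₀ ∈ s
  · have hprod : ∀ t ⊆ s, ∏ i ∈ t, g i = if i₀ ∈ t then g i₀ else 1 := fun t ht => by
      split_ifs with h
      · exact Finset.prod_eq_single_of_mem i₀ h fun i hi hne => hg i (ht hi) hne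
      · exact Finset.prod_eq_one fun i hi => hg i (ht hi) (ne_of_mem_of_not_mem hi h)
    rw [← Finset.add_sum_erase _ _ hi₀, hprod _ (Finset.erase_subset _ _), hprod _ subset_rfl,
      Finset.sum_congr rfl fun j hj => hprod _ (Finset.erase_subset _ _)]
    simp only [Finset.notMem_erase, if_false, hi₀, if_true]
    rw [Finset.sum_congr rfl fun j hj => if_pos (Finset.mem_erase.2
      ⟨(Finset.ne_of_mem_erase hj).symm, hi₀⟩), Finset.sum_const, Finset.card_erase_of_mem hi₀,
      nsmul_eq_mul, Nat.cast_pred (Finset.card_pos.2 ⟨i₀, hi₀⟩)]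
  · have hone : ∀ i ∈ s, g i = 1 := fun i hi => hg i hi (ne_of_mem_of_not_mem hi hi₀)
    rw [Finset.prod_congr rfl hone, Finset.sum_congr rfl fun j _ =>
      Finset.prod_eq_one fun i hi => hone i (Finset.mem_of_mem_erase hi)]
    simp

namespace DecTree

open SimpleGraph

variable (T : DecTree)

theorem path_isPath (x y : T.C) : (T.path x y).IsPath :=
  (T.isTree.existsUnique_path x y).exists.choose_spec

theorem eq_path {x y : T.C} {p : T.G.Walk x y} (hp : p.IsPath) : p = T.path x y :=
  (T.isTree.existsUnique_path x y).unique hp (T.path_isPath x y)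

theorem path_self (x : T.C) : T.path x x = .nil :=
  (T.eq_path .nil).symm

theorem mem_support_path_comm {x y u : T.C} :
    u ∈ (T.path x y).support ↔ u ∈ (T.path y x).support := by
  rw [← T.eq_path (T.path_isPath x y).reverse, Walk.support_reverse, List.mem_reverse]

theorem path_eq_cons {x x' y : T.C} (h : T.G.Adj x x') (hx' : x' ∈ (T.path x y).support) :
    T.path x y = .cons h (T.path x' y) := by
  have hp := T.path_isPath x y
  have htake : (T.path x y).takeUntil x' hx' = .cons h .nil :=
    (T.eq_path (hp.takeUntil hx')).trans
      (T.eq_path ((Walk.cons_isPath_iff h .nil).2 ⟨.nil, by simpa using h.ne⟩)).symm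
  have hdrop : (T.path x y).dropUntil x' hx' = T.path x' y := T.eq_path (hp.dropUntil hx')
  rw [← (T.path x y).take_spec hx', htake, hdrop]
  rfl

theorem notMem_support_path_of_adj {x x' y : T.C} (h : T.G.Adj x x')
    (hx' : x' ∈ (T.path x y).support) : x ∉ (T.path x' y).support := by
  have hp := T.path_isPath x y
  rw [T.path_eq_cons h hx', Walk.cons_isPath_iff] at hp
  exact hp.2

theorem eq_of_adj_of_mem_support_path {x x' u y : T.C} (h : T.G.Adj x x')
    (hx' : x' ∈ (T.path x y).support) (hu : T.G.Adj x u) (huy : u ∈ (T.path x y).support) :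
    u = x' := by
  have hcons := (T.path_eq_cons hu huy).symm.trans (T.path_eq_cons h hx')
  simpa using congrArg (Walk.getVert · 1) hcons

theorem mem_support_path_or {x x' : T.C} (h : T.G.Adj x x') (y : T.C) :
    x' ∈ (T.path x y).support ∨ x ∈ (T.path x' y).support := by
  refine or_iff_not_imp_left.2 fun hx' => ?_
  rw [← T.eq_path ((Walk.cons_isPath_iff h.symm _).2 ⟨T.path_isPath x y, hx'⟩)]
  simp

theorem mem_support_path_of_adj {x x' w y : T.C} (h : T.G.Adj x x') (hw : T.G.Adj x' w)
    (hwx : w ≠ x) (hwy : w ∈ (T.path x' y).support) : x' ∈ (T.path x y).support :=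
  (T.mem_support_path_or h y).resolve_right fun hx =>
    hwx (T.eq_of_adj_of_mem_support_path h.symm hx hw hwy)

noncomputable def branch (x x' : T.C) : Finset T.C :=
  Finset.univ.filter fun y => x' ∈ (T.path x y).support

theorem mem_branch {x x' y : T.C} : y ∈ T.branch x x' ↔ x' ∈ (T.path x y).support := by
  simp [branch]

theorem self_mem_branch (x x' : T.C) : x' ∈ T.branch x x' :=
  T.mem_branch.2 (T.path x x').end_mem_support

theorem branch_erase_self {x x' : T.C} (h : T.G.Adj x x') :
    (T.branch x x').erase x' = ((T.G.neighborFinset x').erase x).biUnion (T.branch x') := by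
  ext y
  simp only [Finset.mem_erase, Finset.mem_biUnion, mem_neighborFinset, mem_branch]
  constructor
  · rintro ⟨hyx', hx'⟩
    obtain ⟨w, hw, p, hp⟩ := Walk.exists_eq_cons_of_ne (Ne.symm hyx') (T.path x' y)
    have hwy : w ∈ (T.path x' y).support := by simp [hp]
    exact ⟨w, ⟨fun hwx => T.notMem_support_path_of_adj h hx' (hwx ▸ hwy), hw⟩, hwy⟩
  · rintro ⟨w, ⟨hwx, hw⟩, hwy⟩
    refine ⟨fun hyx' => ?_, T.mem_support_path_of_adj h hw hwx hwy⟩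
    subst hyx'
    simp [path_self, hw.ne'] at hwy

theorem sum_branch {M : Type*} [AddCommMonoid M] {x x' : T.C} (h : T.G.Adj x x') (g : T.C → M) :
    ∑ y ∈ T.branch x x', g y =
      g x' + ∑ w ∈ (T.G.neighborFinset x').erase x, ∑ y ∈ T.branch x' w, g y := by
  rw [← Finset.add_sum_erase _ g (T.self_mem_branch x x'), T.branch_erase_self h,
    Finset.sum_biUnion]
  intro w hw w' hw' hne
  simp only [Finset.coe_erase, Set.mem_sdiff, Finset.mem_coe, mem_neighborFinset] at hw hw'
  refine Finset.disjoint_left.2 fun y hy hy' => hne ?_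
  exact T.eq_of_adj_of_mem_support_path hw'.1 (T.mem_branch.1 hy') hw.1 (T.mem_branch.1 hy)

theorem card_branch_lt {x x' w : T.C} (h : T.G.Adj x x') (hw : T.G.Adj x' w) (hwx : w ≠ x) :
    (T.branch x' w).card < (T.branch x x').card := by
  refine Finset.card_lt_card ⟨fun y hy => ?_, fun hsub => ?_⟩
  · exact Finset.mem_of_mem_erase (T.branch_erase_self h ▸
      Finset.mem_biUnion.2 ⟨w, Finset.mem_erase.2 ⟨hwx, (mem_neighborFinset _ _ _).2 hw⟩, hy⟩)
  · have hx' := T.mem_branch.1 (hsub (T.self_mem_branch x x'))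
    simp only [path_self, Walk.support_nil, List.mem_singleton] at hx'
    exact hw.ne hx'.symm

theorem phi_self (x : T.C) : T.phi x x = 1 := by
  refine Finset.prod_eq_one fun uw huw => ?_
  simp [path_self] at huw
  exact absurd huw.1 huw.2.1

theorem phi_eq_prod_mul {x x' y : T.C} (h : T.G.Adj x x') (hx' : x' ∈ (T.path x y).support) :
    T.phi x y = (∏ v ∈ ((T.G.neighborFinset x').erase x).filter
      (· ∉ (T.path x' y).support), T.q x' v) * T.phi x' y := by
  have hx := T.notMem_support_path_of_adj h hx'
  have hcells : Finset.univ.filter (fun uw : T.C × T.C =>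
      uw.1 ∈ (T.path x y).support ∧ uw.1 ≠ x ∧ T.G.Adj uw.1 uw.2 ∧
        uw.2 ∉ (T.path x y).support) =
      (((T.G.neighborFinset x').erase x).filter (· ∉ (T.path x' y).support)).image (x', ·) ∪
      Finset.univ.filter (fun uw : T.C × T.C =>
        uw.1 ∈ (T.path x' y).support ∧ uw.1 ≠ x' ∧ T.G.Adj uw.1 uw.2 ∧
          uw.2 ∉ (T.path x' y).support) := by
    ext ⟨u, v⟩
    simp only [Finset.mem_filter, Finset.mem_univ, true_and, Finset.mem_union, Finset.mem_image,
      Finset.mem_erase, mem_neighborFinset, T.path_eq_cons h hx', Walk.support_cons,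
      List.mem_cons, Prod.mk.injEq, not_or]
    constructor
    · rintro ⟨hu | hu, hux, huv, hvx, hv⟩
      · exact absurd hu hux
      · by_cases hux' : u = x'
        · subst hux'
          exact Or.inl ⟨v, ⟨⟨hvx, huv⟩, hv⟩, rfl, rfl⟩
        · exact Or.inr ⟨hu, hux', huv, hv⟩
    · rintro (⟨v, ⟨⟨hvx, hv⟩, hvy⟩, rfl, rfl⟩ | ⟨hu, hux', huv, hv⟩)
      · exact ⟨Or.inr (T.path x' y).start_mem_support, h.ne', hv, hvx, hvy⟩
      · refine ⟨Or.inr hu, fun hux => hx (hux ▸ hu), huv, fun hvx => hux' ?_, hv⟩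
        subst hvx
        exact T.eq_of_adj_of_mem_support_path h hx' huv.symm
          (by rw [T.path_eq_cons h hx']; exact List.mem_cons_of_mem _ hu)
  rw [phi, hcells, Finset.prod_union, Finset.prod_image (by simp)]
  · rfl
  · refine Finset.disjoint_left.2 fun uw huw huw' => ?_
    obtain ⟨v, -, rfl⟩ := Finset.mem_image.1 huw
    exact (Finset.mem_filter.1 huw').2.2.1 rfl

theorem phi_of_adj {x x' : T.C} (h : T.G.Adj x x') :
    T.phi x x' = ∏ v ∈ (T.G.neighborFinset x').erase x, T.q x' v := by
  rw [T.phi_eq_prod_mul h (T.path x x').end_mem_support, phi_self, mul_one]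
  refine Finset.prod_congr (Finset.filter_true_of_mem fun v hv => ?_) fun _ _ => rfl
  simpa [path_self] using (T.G.ne_of_adj ((mem_neighborFinset _ _ _).1
    (Finset.mem_of_mem_erase hv))).symm

theorem phi_of_mem_branch {x x' w y : T.C} (h : T.G.Adj x x') (hw : T.G.Adj x' w) (hwx : w ≠ x)
    (hy : y ∈ T.branch x' w) :
    T.phi x y = (∏ v ∈ ((T.G.neighborFinset x').erase x).erase w, T.q x' v) * T.phi x' y := by
  rw [T.mem_branch] at hy
  rw [T.phi_eq_prod_mul h (T.mem_support_path_of_adj h hw hwx hy)]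
  congr 2
  ext v
  simp only [Finset.mem_filter, Finset.mem_erase, mem_neighborFinset]
  constructor
  · rintro ⟨⟨hvx, hv⟩, hvy⟩
    exact ⟨fun hvw => hvy (hvw ▸ hy), hvx, hv⟩
  · rintro ⟨hvw, hvx, hv⟩
    exact ⟨⟨hvx, hv⟩, fun hvy => hvw (T.eq_of_adj_of_mem_support_path hw hy hv hvy)⟩

theorem xhat_eq_mul_phi (v a : T.C) : T.xhat v a = T.f a * T.phi v a := rfl

theorem ne_root_of_lt {v0 x x' : T.C} (hlt : T.lt v0 x x') : x' ≠ v0 := by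
  rintro rfl
  have hx := hlt.2
  simp only [path_self, Walk.support_nil, List.mem_singleton] at hx
  exact hlt.1 hx

theorem notMem_support_path_root_of_lt {v0 x x' w : T.C} (hlt : T.lt v0 x x') (h : T.G.Adj x x')
    (hw : T.G.Adj x' w) (hwx : w ≠ x) : w ∉ (T.path v0 x').support := fun hwv =>
  hwx (T.eq_of_adj_of_mem_support_path h.symm (T.mem_support_path_comm.1 hlt.2) hw
    (T.mem_support_path_comm.1 hwv))

theorem lt_of_lt_of_adj {v0 x x' w : T.C} (hlt : T.lt v0 x x') (h : T.G.Adj x x')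
    (hw : T.G.Adj x' w) (hwx : w ≠ x) : T.lt v0 x' w :=
  ⟨hw.ne, T.mem_support_path_comm.2 <| (T.mem_support_path_or hw.symm v0).resolve_right
    fun hwv => T.notMem_support_path_root_of_lt hlt h hw hwx (T.mem_support_path_comm.1 hwv)⟩

variable {T}

theorem IsRoot.exists_q_eq_one {v0 x x' : T.C} (hroot : T.IsRoot v0) (h : T.G.Adj x x')
    (hlt : T.lt v0 x x') :
    ∃ v₁, ∀ w ∈ (T.G.neighborFinset x').erase x, w ≠ v₁ → T.q x' w = 1 := by
  by_cases harrow : T.isArrow x'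
  · exact ⟨x, fun w hw _ =>
      T.q_arrow x' w harrow ((mem_neighborFinset _ _ _).1 (Finset.mem_of_mem_erase hw))⟩
  obtain ⟨hge, huniq⟩ := hroot.2.2 x' harrow (T.ne_root_of_lt hlt)
  have hoff : ∀ w ∈ (T.G.neighborFinset x').erase x,
      T.G.Adj x' w ∧ s(x', w) ∉ (T.path v0 x').edges := fun w hw => by
    obtain ⟨hwx, hw⟩ := Finset.mem_erase.1 hw
    rw [mem_neighborFinset] at hw
    exact ⟨hw, fun he => T.notMem_support_path_root_of_lt hlt h hw hwx
      (Walk.snd_mem_support_of_mem_edges _ he)⟩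
  have hle : ∀ w ∈ (T.G.neighborFinset x').erase x, 1 ≤ T.q x' w := fun w hw =>
    hge w (hoff w hw).1 (hoff w hw).2
  by_cases hbig : ∃ v₁ ∈ (T.G.neighborFinset x').erase x, 1 < T.q x' v₁
  · obtain ⟨v₁, hv₁, hq⟩ := hbig
    refine ⟨v₁, fun w hw hne => le_antisymm (not_lt.1 fun hq' => hne ?_) (hle w hw)⟩
    exact huniq w v₁ (hoff w hw).1 (hoff v₁ hv₁).1 (hoff w hw).2 (hoff v₁ hv₁).2 hq' hq
  · push Not at hbig
    exact ⟨x, fun w hw _ => le_antisymm (hbig w hw) (hle w hw)⟩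

theorem sum_branch_phi_mul_two_sub_degree {v0 x x' : T.C} (hroot : T.IsRoot v0) (h : T.G.Adj x x')
    (hlt : T.lt v0 x x') : ∑ y ∈ T.branch x x', T.phi x y * (2 - T.G.degree y) = 1 := by
  have hsub : ∀ w ∈ (T.G.neighborFinset x').erase x,
      ∑ y ∈ T.branch x' w, T.phi x y * (2 - T.G.degree y) =
        ∏ v ∈ ((T.G.neighborFinset x').erase x).erase w, T.q x' v := by
    intro w hw
    rw [Finset.mem_erase, mem_neighborFinset] at hw
    obtain ⟨hwx, hw⟩ := hw
    have ih := sum_branch_phi_mul_two_sub_degree hroot hw (T.lt_of_lt_of_adj hlt h hw hwx)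
    rw [← mul_one (∏ v ∈ _, _), ← ih, Finset.mul_sum]
    exact Finset.sum_congr rfl fun y hy => by rw [T.phi_of_mem_branch h hw hwx hy, mul_assoc]
  have hdeg : T.G.degree x' = ((T.G.neighborFinset x').erase x).card + 1 := by
    rw [Finset.card_erase_add_one ((mem_neighborFinset _ _ _).2 h.symm),
      card_neighborFinset_eq_degree]
  obtain ⟨v₁, hv₁⟩ := hroot.exists_q_eq_one h hlt
  rw [T.sum_branch h, Finset.sum_congr rfl hsub, Finset.sum_prod_erase_eq_of_eq_one hv₁,
    T.phi_of_adj h, hdeg]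
  push_cast
  ring
termination_by (T.branch x x').card
decreasing_by exact T.card_branch_lt h hw hwx

end DecTree

/-- For a decorated rooted tree with all arrow decorations in `{0,1}`, and an
out-pair `(x, e)` with `e = {x, x'}` and `x < x'`:
`p(x,e) = 1 + Σ_{y ∈ Y(x,e)} φ(x,y)·(δ_y - 2)`, where `Y(x,e)` is the set of
`y ∈ V ∪ A₀` such that `e` lies on the path from `x` to `y` (equivalently,
`x'` lies on that path), and `p(x,e) = Σ x̂_{x,α}` over arrows `α` with
`f(α) ≠ 0` such that `e` lies on the path from `x` to `α`. -/
theorem stmt15 (T : DecTree) (v0 : T.C) (hroot : T.IsRoot v0)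
    (hf : ∀ a, T.isArrow a → T.f a = 0 ∨ T.f a = 1)
    (x x' : T.C) (hadj : T.G.Adj x x') (hlt : T.lt v0 x x') :
    (∑ a ∈ Finset.univ.filter (fun a => T.isArrow a ∧ T.f a ≠ 0 ∧
        x' ∈ (T.path x a).support), T.xhat x a)
    = 1 + ∑ y ∈ Finset.univ.filter (fun y => (¬ T.isArrow y ∨ T.f y = 0) ∧
        x' ∈ (T.path x y).support),
        T.phi x y * ((T.G.degree y : ℤ) - 2) := by
  have hxhat : ∀ a ∈ (T.branch x x').filter (fun a => T.isArrow a ∧ T.f a ≠ 0),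
      T.phi x a * (2 - T.G.degree a) = T.xhat x a := by
    intro a ha
    obtain ⟨harrow, hfa⟩ := (Finset.mem_filter.1 ha).2
    rw [T.xhat_eq_mul_phi, (hf a harrow).resolve_left hfa, T.arrowValency a harrow]
    ring
  have key := T.sum_branch_phi_mul_two_sub_degree hroot hadj hlt
  rw [← Finset.sum_filter_add_sum_filter_not _ fun a => T.isArrow a ∧ T.f a ≠ 0,
    Finset.sum_congr rfl hxhat] at key
  have hpos : Finset.univ.filter (fun a => T.isArrow a ∧ T.f a ≠ 0 ∧
      x' ∈ (T.path x a).support) = (T.branch x x').filter fun a => T.isArrow a ∧ T.f a ≠ 0 := by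
    ext; simp only [Finset.mem_filter, Finset.mem_univ, true_and, T.mem_branch]; tauto
  have hrest : Finset.univ.filter (fun y => (¬ T.isArrow y ∨ T.f y = 0) ∧
      x' ∈ (T.path x y).support) = (T.branch x x').filter fun a => ¬ (T.isArrow a ∧ T.f a ≠ 0) := by
    ext; simp only [Finset.mem_filter, Finset.mem_univ, true_and, T.mem_branch]; tauto
  rw [hpos, hrest]
  simp only [← neg_sub (2 : ℤ), mul_neg, Finset.sum_neg_distrib]
  linarith
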